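/- arXiv:2307.00414 — 8 statements merged into one kernel-verified Lean document; each statement's English description precedes it below -/
import Mathlib

section
/- If X is a hyperconvex metric space, then X is geodesic: for any x, y ∈ X there is an isometric embedding of the interval [0, d(x,y)] into X sending 0 to x and d(x,y) to y. -/
universe u

/-- A hyperconvex metric space is geodesic: for any `x, y` there is an isometric
embedding of the interval `[0, dist x y]` sending `0` to `x` and `dist x y` to `y`. -/
theorem hyperconvex_is_geodesic {X : Type u} [MetricSpace X]
    (hX : ∀ (ι : Type u) (x : ι → X) (r : ι → ℝ), (∀ i, 0 ≤ r i) →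
      (∀ i j, i ≠ j → dist (x i) (x j) ≤ r i + r j) →
      (⋂ i, Metric.closedBall (x i) (r i)).Nonempty) :
    ∀ x y : X, ∃ f : ℝ → X, f 0 = x ∧ f (dist x y) = y ∧
      ∀ s ∈ Set.Icc (0 : ℝ) (dist x y), ∀ t ∈ Set.Icc (0 : ℝ) (dist x y),
        dist (f s) (f t) = |s - t| := by
  intro x y
  set d := dist x y with hd
  have hd0 : (0 : ℝ) ≤ d := dist_nonneg
  -- the collection of "good" partial geodesic graphs
  set S : Set (Set (ℝ × X)) := {G | (0, x) ∈ G ∧ (d, y) ∈ G ∧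
    (∀ p ∈ G, p.1 ∈ Set.Icc (0:ℝ) d) ∧
    ∀ p ∈ G, ∀ q ∈ G, dist p.2 q.2 = |p.1 - q.1|} with hSdef
  have hbase : ({(0, x), (d, y)} : Set (ℝ × X)) ∈ S := by
    refine ⟨Or.inl rfl, Or.inr rfl, ?_, ?_⟩
    · rintro p (rfl | rfl)
      · exact ⟨le_refl _, hd0⟩
      · exact ⟨hd0, le_refl _⟩
    · rintro p (rfl | rfl) q (rfl | rfl)
      · simp
      · simp [abs_of_nonpos (neg_nonpos.mpr hd0), hd]
      · simpa [abs_of_nonneg hd0, hd] using dist_comm y x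
      · simp
  -- the key extension step
  have hext : ∀ G ∈ S, ∀ t ∈ Set.Icc (0:ℝ) d, ∃ p : X,
      ∀ q ∈ G, dist p q.2 = |t - q.1| := by
    rintro G ⟨h0, hdd, hIcc, hiso⟩ t ht
    have hpair : ∀ i j : ↥G, i ≠ j →
        dist (i : ℝ × X).2 (j : ℝ × X).2 ≤ |t - (i : ℝ × X).1| + |t - (j : ℝ × X).1| := by
      intro i j _
      calc dist (i : ℝ × X).2 (j : ℝ × X).2 = |(i : ℝ × X).1 - (j : ℝ × X).1| :=
            hiso i i.2 j j.2
        _ ≤ |t - (i : ℝ × X).1| + |t - (j : ℝ × X).1| := by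
            rw [abs_sub_comm t (i : ℝ × X).1]
            exact (abs_sub_le _ t _)
    obtain ⟨p, hp⟩ := hX (↥G) (fun i => (i : ℝ × X).2) (fun i => |t - (i : ℝ × X).1|)
      (fun i => abs_nonneg _) hpair
    refine ⟨p, fun q hq => ?_⟩
    simp only [Set.mem_iInter, Metric.mem_closedBall] at hp
    have hub : dist p q.2 ≤ |t - q.1| := hp ⟨q, hq⟩
    have h1 : dist p x ≤ t := by
      have := hp ⟨(0, x), h0⟩
      simpa [abs_of_nonneg ht.1] using this
    have h2 : dist p y ≤ d - t := by
      have := hp ⟨(d, y), hdd⟩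
      rw [abs_sub_comm, abs_of_nonneg (sub_nonneg.2 ht.2)] at this
      exact this
    have hq1 : dist x q.2 = q.1 := by
      have := hiso (0, x) h0 q hq
      rw [abs_sub_comm, sub_zero, abs_of_nonneg (hIcc q hq).1] at this
      exact this
    have hq2 : dist y q.2 = d - q.1 := by
      have := hiso (d, y) hdd q hq
      rw [abs_of_nonneg (sub_nonneg.2 (hIcc q hq).2)] at this
      exact this
    have hlb : |t - q.1| ≤ dist p q.2 := by
      rw [abs_sub_le_iff]
      constructor
      · have := dist_triangle y p q.2
        rw [dist_comm y p] at this
        linarith [hq2 ▸ this]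
      · have := dist_triangle x p q.2
        rw [dist_comm x p] at this
        linarith [hq1 ▸ this]
    exact le_antisymm hub hlb
  -- Zorn's lemma
  have hchainub : ∀ c ⊆ S, IsChain (· ⊆ ·) c → c.Nonempty →
      ∃ ub ∈ S, ∀ s ∈ c, s ⊆ ub := by
    intro c hcS hchain hcne
    obtain ⟨G0, hG0⟩ := hcne
    refine ⟨⋃₀ c, ⟨?_, ?_, ?_, ?_⟩, fun s hs => Set.subset_sUnion_of_mem hs⟩
    · exact ⟨G0, hG0, (hcS hG0).1⟩
    · exact ⟨G0, hG0, (hcS hG0).2.1⟩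
    · rintro p ⟨A, hA, hpA⟩
      exact (hcS hA).2.2.1 p hpA
    · rintro p ⟨A, hA, hpA⟩ q ⟨B, hB, hqB⟩
      rcases hchain.total hA hB with h | h
      · exact (hcS hB).2.2.2 p (h hpA) q hqB
      · exact (hcS hA).2.2.2 p hpA q (h hqB)
  obtain ⟨G, -, hGmax⟩ := zorn_subset_nonempty S hchainub _ hbase
  have hGS : G ∈ S := hGmax.1
  obtain ⟨h0G, hdG, hIccG, hisoG⟩ := hGS
  have hGS : G ∈ S := hGmax.1
  -- the domain of the maximal element is all of Icc 0 d
  have hdom : ∀ t ∈ Set.Icc (0:ℝ) d, ∃ p, (t, p) ∈ G := by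
    intro t ht
    obtain ⟨p, hp⟩ := hext G hGS t ht
    have hins : insert (t, p) G ∈ S := by
      refine ⟨Set.mem_insert_of_mem _ h0G, Set.mem_insert_of_mem _ hdG, ?_, ?_⟩
      · rintro q (rfl | hq)
        · exact ht
        · exact hIccG q hq
      · rintro q (rfl | hq) r (rfl | hr)
        · simp
        · exact hp r hr
        · rw [dist_comm, abs_sub_comm]; exact hp q hq
        · exact hisoG q hq r hr
    have : insert (t, p) G = G := hGmax.eq_of_ge hins (Set.subset_insert _ _)
    exact ⟨p, this ▸ Set.mem_insert _ _⟩
  have hfun : ∀ t p q, (t, p) ∈ G → (t, q) ∈ G → p = q := by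
    intro t p q hp hq
    have := hisoG (t, p) hp (t, q) hq
    simp only [sub_self, abs_zero] at this
    exact dist_eq_zero.mp this
  classical
  refine ⟨fun t => if h : ∃ p, (t, p) ∈ G then h.choose else x, ?_, ?_, ?_⟩
  · have h : ∃ p, ((0:ℝ), p) ∈ G := ⟨x, h0G⟩
    simp only [dif_pos h]
    exact hfun 0 _ _ h.choose_spec h0G
  · have h : ∃ p, (d, p) ∈ G := ⟨y, hdG⟩
    simp only [dif_pos h]
    exact hfun d _ _ h.choose_spec hdG
  · intro s hs t ht
    have h1 : ∃ p, (s, p) ∈ G := hdom s hs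
    have h2 : ∃ p, (t, p) ∈ G := hdom t ht
    simp only [dif_pos h1, dif_pos h2]
    exact hisoG (s, h1.choose) h1.choose_spec (t, h2.choose) h2.choose_spec
end

section
/- A geodesic metric space X is injective (hyperconvex) if and only if its closed balls satisfy the Helly property: every family of pairwise intersecting closed balls has nonempty total intersection. -/
universe u

/-- A geodesic metric space is hyperconvex (injective) if and only if its closed balls
satisfy the Helly property: every family of pairwise intersecting closed balls has
nonempty total intersection. -/
theorem geodesic_hyperconvex_iff_helly {X : Type u} [MetricSpace X]
    (hgeo : ∀ x y : X, ∃ f : ℝ → X, f 0 = x ∧ f (dist x y) = y ∧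
      ∀ s ∈ Set.Icc (0 : ℝ) (dist x y), ∀ t ∈ Set.Icc (0 : ℝ) (dist x y),
        dist (f s) (f t) = |s - t|) :
    (∀ (ι : Type u) (x : ι → X) (r : ι → ℝ), (∀ i, 0 ≤ r i) →
      (∀ i j, i ≠ j → dist (x i) (x j) ≤ r i + r j) →
      (⋂ i, Metric.closedBall (x i) (r i)).Nonempty)
    ↔
    (∀ (ι : Type u) (x : ι → X) (r : ι → ℝ),
      (∀ i j, (Metric.closedBall (x i) (r i) ∩ Metric.closedBall (x j) (r j)).Nonempty) →
      (⋂ i, Metric.closedBall (x i) (r i)).Nonempty) := by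
  constructor
  · intro H ι x r hpair
    apply H ι x r
    · intro i
      obtain ⟨z, hz, -⟩ := hpair i i
      exact le_trans dist_nonneg (Metric.mem_closedBall'.mp hz)
    · intro i j _
      obtain ⟨z, hzi, hzj⟩ := hpair i j
      calc dist (x i) (x j) ≤ dist (x i) z + dist z (x j) := dist_triangle _ _ _
        _ ≤ r i + r j := add_le_add (Metric.mem_closedBall'.mp hzi)
            (Metric.mem_closedBall.mp hzj)
  · intro H ι x r hr hdist
    apply H ι x r
    intro i j
    rcases eq_or_ne i j with rfl | hne
    · exact ⟨x i, by simp [hr i], by simp [hr i]⟩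
    · obtain ⟨f, hf0, hfd, hiso⟩ := hgeo (x i) (x j)
      set d := dist (x i) (x j) with hd
      have hd0 : 0 ≤ d := dist_nonneg
      set t := min (r i) d with ht
      have ht0 : 0 ≤ t := le_min (hr i) hd0
      have htd : t ≤ d := min_le_right _ _
      refine ⟨f t, ?_, ?_⟩
      · have := hiso 0 ⟨le_refl 0, hd0⟩ t ⟨ht0, htd⟩
        rw [hf0] at this
        simp only [Metric.mem_closedBall]
        rw [dist_comm, this, abs_of_nonpos (by linarith)]
        linarith [min_le_left (r i) d]
      · have := hiso t ⟨ht0, htd⟩ d ⟨hd0, le_refl d⟩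
        rw [hfd] at this
        simp only [Metric.mem_closedBall]
        rw [this, abs_of_nonpos (by linarith)]
        rcases le_or_gt (r i) d with h | h
        · have : t = r i := min_eq_left h
          have hrij := hdist i j hne
          linarith
        · have : t = d := min_eq_right h.le
          linarith [hr j]
end

section
/- Any complete ℝ-tree is hyperconvex (hence injective). -/
universe u

/-- Any complete ℝ-tree (a geodesic, 0-hyperbolic metric space) is hyperconvex. -/
theorem complete_real_tree_hyperconvex {X : Type u} [MetricSpace X] [Nonempty X]
    [CompleteSpace X]
    (hgeo : ∀ x y : X, ∃ f : ℝ → X, f 0 = x ∧ f (dist x y) = y ∧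
      ∀ s ∈ Set.Icc (0 : ℝ) (dist x y), ∀ t ∈ Set.Icc (0 : ℝ) (dist x y),
        dist (f s) (f t) = |s - t|)
    (htree : ∀ x y z t : X,
      dist x y + dist z t ≤ max (dist x z + dist y t) (dist x t + dist y z)) :
    ∀ (ι : Type u) (x : ι → X) (r : ι → ℝ), (∀ i, 0 ≤ r i) →
      (∀ i j, i ≠ j → dist (x i) (x j) ≤ r i + r j) →
      (⋂ i, Metric.closedBall (x i) (r i)).Nonempty := by
  intro ι x r hr hsep
  rcases isEmpty_or_nonempty ι with hι | hι
  · refine ⟨Classical.arbitrary X, ?_⟩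
    simp
  obtain ⟨i0⟩ := hι
  haveI : Nonempty ι := ⟨i0⟩
  set p := x i0 with hp
  have hpair : ∀ i j, dist (x i) (x j) ≤ r i + r j := by
    intro i j
    rcases eq_or_ne i j with rfl | h
    · simp only [dist_self]
      linarith [hr i]
    · exact hsep i j h
  choose f hf0 hfd hiso using fun i => hgeo p (x i)
  set t : ι → ℝ := fun i => max 0 (dist p (x i) - r i) with ht
  set y : ι → X := fun i => f i (t i) with hy
  have ht0 : ∀ i, 0 ≤ t i := fun i => le_max_left _ _
  have htge : ∀ i, dist p (x i) - r i ≤ t i := fun i => le_max_right _ _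
  have htle : ∀ i, t i ≤ dist p (x i) := by
    intro i
    exact max_le dist_nonneg (by linarith [hr i])
  have hts : ∀ i, t i ≤ r i0 := by
    intro i
    refine max_le (hr i0) ?_
    have := hpair i0 i
    rw [← hp] at this
    linarith
  have hyp : ∀ i, dist p (y i) = t i := by
    intro i
    have := hiso i 0 ⟨le_refl _, dist_nonneg⟩ (t i) ⟨ht0 i, htle i⟩
    rw [hf0 i] at this
    rw [hy]
    rw [this]
    rw [abs_of_nonpos (by linarith [ht0 i])]
    ring
  have hyx : ∀ i, dist (y i) (x i) = dist p (x i) - t i := by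
    intro i
    have := hiso i (t i) ⟨ht0 i, htle i⟩ (dist p (x i)) ⟨dist_nonneg, le_refl _⟩
    rw [hfd i] at this
    rw [hy, this, abs_of_nonpos (by linarith [htle i])]
    ring
  -- Fact 2: dist (y i) (x j) ≤ r j + max 0 (t j - t i)
  have fact2 : ∀ i j, dist (y i) (x j) ≤ r j + max 0 (t j - t i) := by
    intro i j
    have H := htree (y i) (x j) p (x i)
    rcases le_max_iff.mp H with H1 | H1
    · -- dist (y i) (x j) + dist p (x i) ≤ dist (y i) p + dist (x j) (x i)
      have hcomm : dist (y i) p = t i := by rw [dist_comm]; exact hyp i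
      have htri : dist (x j) (x i) ≤ dist (x j) p + dist p (x i) := dist_triangle _ _ _
      have hM0 : (0:ℝ) ≤ max 0 (t j - t i) := le_max_left _ _
      have hM1 : t j - t i ≤ max 0 (t j - t i) := le_max_right _ _
      rcases max_cases 0 (dist p (x i) - r i) with ⟨he, hc⟩ | ⟨he, hc⟩
      · -- t i = 0, dist p (x i) ≤ r i
        have hti : t i = 0 := he
        have hji : dist (x j) (x i) ≤ dist (x j) p + dist p (x i) := htri
        have hdj : dist p (x j) - r j ≤ t j := htge j
        rw [dist_comm (x j) p] at hji
        linarith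
      · -- t i = dist p (x i) - r i
        have hti : t i = dist p (x i) - r i := he
        have := hpair j i
        linarith
    · -- dist (y i) (x j) + dist p (x i) ≤ dist (y i) (x i) + dist (x j) p
      have h1 := hyx i
      have hdj : dist p (x j) - r j ≤ t j := htge j
      have hM1 : t j - t i ≤ max 0 (t j - t i) := le_max_right _ _
      rw [dist_comm (x j) p] at H1
      linarith
  -- Fact 1: t j ≤ t i → dist (y i) (y j) ≤ t i - t j
  have fact1 : ∀ i j, t j ≤ t i → dist (y i) (y j) ≤ t i - t j := by
    intro i j hji
    rcases eq_or_lt_of_le (ht0 j) with h0 | h0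
    · -- t j = 0, so y j = p
      have hyj : y j = p := by
        rw [hy]
        simp only
        rw [← h0, hf0 j]
      rw [hyj, dist_comm, hyp i, ← h0]
      simp
    · -- t j > 0, so t j = dist p (x j) - r j
      have htj : t j = dist p (x j) - r j := by
        rcases max_cases 0 (dist p (x j) - r j) with ⟨he, _⟩ | ⟨he, _⟩
        · rw [ht] at h0; simp only at h0; rw [he] at h0; exact absurd h0 (lt_irrefl _)
        · exact he
      have H := htree (y i) (y j) p (x j)
      rcases le_max_iff.mp H with H1 | H1
      · have hcomm : dist (y i) p = t i := by rw [dist_comm]; exact hyp i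
        have h2 := hyx j
        linarith
      · have h2 : dist (y j) p = t j := by rw [dist_comm]; exact hyp j
        have h3 := fact2 i j
        have hM : max 0 (t j - t i) = 0 := max_eq_left (by linarith)
        rw [hM] at h3
        linarith
  -- general: dist (y i) (y j) ≤ |t i - t j|
  have fact1' : ∀ i j, dist (y i) (y j) ≤ |t i - t j| := by
    intro i j
    rcases le_total (t j) (t i) with h | h
    · rw [abs_of_nonneg (by linarith)]; exact fact1 i j h
    · rw [abs_of_nonpos (by linarith), dist_comm]
      have := fact1 j i h
      linarith
  -- supremum
  have hbdd : BddAbove (Set.range t) := ⟨r i0, by rintro _ ⟨i, rfl⟩; exact hts i⟩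
  set s := ⨆ i, t i with hs
  have htls : ∀ i, t i ≤ s := fun i => le_ciSup hbdd i
  have hseq : ∀ n : ℕ, ∃ i, s - 1 / (n + 1) < t i := by
    intro n
    have hlt : s - 1 / (n + 1) < s := by
      have : (0:ℝ) < 1 / (n + 1) := by positivity
      linarith
    exact exists_lt_of_lt_ciSup hlt
  choose seq hseqlt using hseq
  set u : ℕ → X := fun n => y (seq n) with hu
  have hone : ∀ n m : ℕ, n ≤ m → (1:ℝ) / (m + 1) ≤ 1 / (n + 1) := by
    intro n m h
    have hc : (n:ℝ) ≤ m := Nat.cast_le.mpr h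
    apply one_div_le_one_div_of_le (by positivity)
    linarith
  have hcauchy : CauchySeq u := by
    refine cauchySeq_of_le_tendsto_0 (fun n => 1 / (n + 1 : ℝ)) ?_ ?_
    · intro n m N hn hm
      have h1 := fact1' (seq n) (seq m)
      have h2 := hseqlt n
      have h3 := hseqlt m
      have h4 := htls (seq n)
      have h5 := htls (seq m)
      have h6 := hone N n hn
      have h7 := hone N m hm
      calc dist (u n) (u m) ≤ |t (seq n) - t (seq m)| := h1
        _ ≤ 1 / (N + 1) := by
            rw [abs_sub_le_iff]
            constructor <;> linarith
    · exact tendsto_one_div_add_atTop_nhds_zero_nat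
  obtain ⟨z, hz⟩ := cauchySeq_tendsto_of_complete hcauchy
  refine ⟨z, Set.mem_iInter.2 fun j => ?_⟩
  rw [Metric.mem_closedBall]
  have hbound : ∀ n : ℕ, dist z (x j) ≤ dist z (u n) + r j + 1 / (n + 1) := by
    intro n
    have h1 : dist z (x j) ≤ dist z (u n) + dist (u n) (x j) := dist_triangle _ _ _
    have h2 := fact2 (seq n) j
    have h3 := hseqlt n
    have h4 := htls j
    have h5 : (0:ℝ) < 1 / (n + 1) := by positivity
    have h6 : max 0 (t j - t (seq n)) ≤ 1 / (n + 1) := by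
      apply max_le (le_of_lt h5)
      linarith
    calc dist z (x j) ≤ dist z (u n) + dist (u n) (x j) := h1
      _ ≤ dist z (u n) + (r j + max 0 (t j - t (seq n))) := by linarith
      _ ≤ dist z (u n) + r j + 1 / (n + 1) := by linarith
  have hlim : Filter.Tendsto (fun n : ℕ => dist z (u n) + r j + 1 / (n + 1))
      Filter.atTop (nhds (0 + r j + 0)) := by
    apply Filter.Tendsto.add
    apply Filter.Tendsto.add
    · simpa using (tendsto_const_nhds.dist hz :
        Filter.Tendsto (fun n => dist z (u n)) Filter.atTop (nhds (dist z z)))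
    · exact tendsto_const_nhds
    · exact tendsto_one_div_add_atTop_nhds_zero_nat
  simp only [zero_add, add_zero] at hlim
  exact ge_of_tendsto hlim (Filter.Eventually.of_forall hbound)
end

section
/- For any metric space X, the set Δ(X) = {f : X → ℝ | f is 1-Lipschitz and f(x) + f(y) ≥ d(x, y) for all x, y}, equipped with the sup metric, is hyperconvex. -/
universe u

/-- `Delta X` is the set of 1-Lipschitz functions `f : X → ℝ` with
`f x + f y ≥ dist x y` for all `x, y`. -/
def Delta (X : Type u) [MetricSpace X] : Set (X → ℝ) :=
  {f | LipschitzWith 1 f ∧ ∀ x y : X, dist x y ≤ f x + f y}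

/-- `Delta X` with the sup metric is hyperconvex: given a family `f i ∈ Delta X` and
radii `r i ≥ 0` with `d_∞(f i, f j) ≤ r i + r j` (expressed pointwise), there is a
function `g ∈ Delta X` with `d_∞(g, f i) ≤ r i` for all `i`. -/
theorem delta_hyperconvex {X : Type u} [MetricSpace X]
    (ι : Type u) (f : ι → X → ℝ) (r : ι → ℝ)
    (hf : ∀ i, f i ∈ Delta X) (hr : ∀ i, 0 ≤ r i)
    (hpair : ∀ i j, ∀ x : X, |f i x - f j x| ≤ r i + r j) :
    ∃ g ∈ Delta X, ∀ i, ∀ x : X, |g x - f i x| ≤ r i := by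
  rcases isEmpty_or_nonempty ι with hι | hι
  · rcases isEmpty_or_nonempty X with hX | hX
    · refine ⟨fun _ => 0, ⟨?_, ?_⟩, fun i => (hι.elim i)⟩
      · exact LipschitzWith.const' 0
      · intro x; exact (hX.elim x)
    · obtain ⟨x₀⟩ := hX
      refine ⟨fun x => dist x x₀, ⟨?_, ?_⟩, fun i => (hι.elim i)⟩
      · exact LipschitzWith.dist_left x₀
      · intro x y
        calc dist x y ≤ dist x x₀ + dist x₀ y := dist_triangle _ _ _
          _ = dist x x₀ + dist y x₀ := by rw [dist_comm x₀ y]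
  · set g : X → ℝ := fun x => ⨅ i, (f i x + r i) with hg
    obtain ⟨i₀⟩ := hι
    have hne : Nonempty ι := ⟨i₀⟩
    have hbdd : ∀ x : X, BddBelow (Set.range fun i => f i x + r i) := by
      intro x
      refine ⟨f i₀ x - r i₀, ?_⟩
      rintro _ ⟨j, rfl⟩
      have := (abs_le.mp (hpair i₀ j x)).2
      show f i₀ x - r i₀ ≤ f j x + r j
      linarith
    have hle : ∀ i x, g x ≤ f i x + r i := fun i x => ciInf_le (hbdd x) i
    have hge : ∀ i x, f i x - r i ≤ g x := by
      intro i x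
      apply le_ciInf
      intro j
      have := (abs_le.mp (hpair i j x)).2
      linarith
    have key : ∀ a b : X, g a - g b ≤ dist a b := by
      intro a b
      have h : g a - dist a b ≤ g b := by
        apply le_ciInf
        intro j
        have hlip := ((hf j).1).dist_le_mul a b
        rw [NNReal.coe_one, one_mul, Real.dist_eq] at hlip
        have h1 := (abs_le.mp hlip).2
        have h2 := hle j a
        linarith
      linarith
    refine ⟨g, ⟨?_, ?_⟩, ?_⟩
    · rw [lipschitzWith_iff_dist_le_mul]
      intro x y
      rw [NNReal.coe_one, one_mul, Real.dist_eq, abs_sub_le_iff]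
      exact ⟨key x y, by simpa [dist_comm] using key y x⟩
    · intro x y
      have hij : ∀ i j : ι, dist x y ≤ (f i x + r i) + (f j y + r j) := by
        intro i j
        have h1 := (hf j).2 x y
        have h2 := (abs_le.mp (hpair i j x)).1
        linarith
      have h1 : dist x y - g y ≤ g x := by
        apply le_ciInf
        intro i
        have h2 : dist x y - (f i x + r i) ≤ g y := by
          apply le_ciInf
          intro j
          linarith [hij i j]
        linarith
      linarith
    · intro i x
      rw [abs_sub_le_iff]
      constructor
      · linarith [hle i x]
      · linarith [hge i x]
end

section
/- If X is a δ-hyperbolic metric space (in the four-point sense), then the injective hull E(X), with the sup metric, is also δ-hyperbolic in the four-point sense. -/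
universe u

/-- The injective hull `E X`: minimal elements of `Delta X`. -/
def InjHull (X : Type u) [MetricSpace X] : Set (X → ℝ) :=
  {f | f ∈ Delta X ∧ ∀ g ∈ Delta X, (∀ x, g x ≤ f x) → g = f}

/-- The sup metric on functions `X → ℝ`. -/
noncomputable def supDist {X : Type u} [MetricSpace X] (f g : X → ℝ) : ℝ :=
  ⨆ x : X, |f x - g x|

section Aux

variable {X : Type u} [MetricSpace X]

lemma delta_lip {f : X → ℝ} (hf : f ∈ Delta X) (x y : X) : f x ≤ f y + dist x y := by
  have h := hf.1.dist_le_mul x y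
  rw [Real.dist_eq, NNReal.coe_one, one_mul] at h
  linarith [(abs_le.mp h).2]

lemma delta_abs_bound {f g : X → ℝ} (hf : f ∈ Delta X) (hg : g ∈ Delta X) (x₀ x : X) :
    |f x - g x| ≤ f x₀ + g x₀ := by
  have h1 := delta_lip hf x x₀
  have h2 := delta_lip hg x x₀
  have h3 := hf.2 x x₀
  have h4 := hg.2 x x₀
  rw [abs_le]
  constructor <;> linarith

lemma supDist_bdd {f g : X → ℝ} (hf : f ∈ Delta X) (hg : g ∈ Delta X) [Nonempty X] :
    BddAbove (Set.range fun x => |f x - g x|) := by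
  obtain ⟨x₀⟩ := ‹Nonempty X›
  exact ⟨f x₀ + g x₀, by rintro _ ⟨x, rfl⟩; exact delta_abs_bound hf hg x₀ x⟩

lemma abs_le_supDist {f g : X → ℝ} (hf : f ∈ Delta X) (hg : g ∈ Delta X) (x : X) :
    |f x - g x| ≤ supDist f g := by
  haveI : Nonempty X := ⟨x⟩
  exact le_ciSup (supDist_bdd hf hg) x

/-- Extremality: minimal elements of `Delta X` satisfy `f x = sup_y (d x y - f y)`. -/
lemma extremal {f : X → ℝ} (hf : f ∈ InjHull X) (x : X) {ε : ℝ} (hε : 0 < ε) :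
    ∃ y, f x + f y < dist x y + ε := by
  haveI : Nonempty X := ⟨x⟩
  set p : X → ℝ := fun z => ⨆ y, (dist z y - f y) with hp
  have hub : ∀ z y : X, dist z y - f y ≤ f z := fun z y => by linarith [hf.1.2 z y]
  have hbdd : ∀ z : X, BddAbove (Set.range fun y => dist z y - f y) := fun z =>
    ⟨f z, by rintro _ ⟨y, rfl⟩; exact hub z y⟩
  have hple : ∀ z, p z ≤ f z := fun z => ciSup_le (hub z)
  have hpge : ∀ z y, dist z y - f y ≤ p z := fun z y => le_ciSup (hbdd z) y
  have plip : ∀ a b : X, p a ≤ p b + dist a b := by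
    intro a b
    refine ciSup_le fun y => ?_
    have : dist a y - f y ≤ (dist b y - f y) + dist a b := by
      have := dist_triangle a b y
      linarith
    exact this.trans (by linarith [hpge b y])
  set q : X → ℝ := fun z => (f z + p z) / 2 with hq
  have hqDelta : q ∈ Delta X := by
    constructor
    · apply LipschitzWith.of_dist_le_mul
      intro a b
      rw [Real.dist_eq, NNReal.coe_one, one_mul, abs_le]
      have hf1 := delta_lip hf.1 a b
      have hf2 := delta_lip hf.1 b a
      have hp1 := plip a b
      have hp2 := plip b a
      rw [dist_comm b a] at hf2 hp2
      constructor <;> simp only [hq] <;> linarith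
    · intro a b
      have h1 := hpge a b
      have h2 := hpge b a
      rw [dist_comm b a] at h2
      simp only [hq]
      linarith
  have hqle : ∀ z, q z ≤ f z := fun z => by
    have := hple z; simp only [hq]; linarith
  have hqf := hf.2 q hqDelta hqle
  have hpx : p x = f x := by
    have := congrFun hqf x
    simp only [hq] at this
    linarith
  have : f x - ε < p x := by linarith
  obtain ⟨y, hy⟩ := exists_lt_of_lt_ciSup this
  exact ⟨y, by linarith⟩

lemma abs_le_form {f g : X → ℝ} (hf : f ∈ InjHull X) (hg : g ∈ InjHull X) (x : X)
    {ε : ℝ} (hε : 0 < ε) : ∃ u v, |f x - g x| < dist u v - f u - g v + ε := by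
  rcases le_total (f x) (g x) with hle | hle
  · obtain ⟨y, hy⟩ := extremal hg x hε
    refine ⟨x, y, ?_⟩
    rw [abs_of_nonpos (by linarith)]
    linarith
  · obtain ⟨y, hy⟩ := extremal hf x hε
    refine ⟨y, x, ?_⟩
    rw [abs_of_nonneg (by linarith), dist_comm y x]
    linarith

lemma form_le_supDist {f h : X → ℝ} (hf : f ∈ Delta X) (hh : h ∈ Delta X) (u w : X) :
    dist u w - f u - h w ≤ supDist f h := by
  have h1 := hf.2 u w
  have h2 : f w - h w ≤ |f w - h w| := le_abs_self _
  have h3 := abs_le_supDist hf hh w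
  linarith

end Aux

/-- If `X` is δ-hyperbolic in the four-point sense, then so is its injective hull
`E X` with the sup metric. -/
theorem injHull_hyperbolic {X : Type u} [MetricSpace X] (δ : ℝ) (hδ : 0 ≤ δ)
    (hX : ∀ x y z t : X, dist x y + dist z t ≤
      max (dist x z + dist y t) (dist x t + dist y z) + δ) :
    ∀ f g h k : X → ℝ, f ∈ InjHull X → g ∈ InjHull X → h ∈ InjHull X →
      k ∈ InjHull X →
      supDist f g + supDist h k ≤
        max (supDist f h + supDist g k) (supDist f k + supDist g h) + δ := by
  intro f g h k hf hg hh hk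
  rcases isEmpty_or_nonempty X with hempty | hne
  · simp only [supDist, iSup, Set.range_eq_empty, Real.sSup_empty]
    simpa using hδ
  refine le_of_forall_pos_le_add fun ε hε => ?_
  have hε4 : (0:ℝ) < ε / 4 := by linarith
  have hε8 : (0:ℝ) < ε / 8 := by linarith
  have hx : supDist f g - ε / 4 < ⨆ x : X, |f x - g x| := by
    rw [← supDist]; linarith
  obtain ⟨x, hxlt⟩ := exists_lt_of_lt_ciSup hx
  have hz : supDist h k - ε / 4 < ⨆ x : X, |h x - k x| := by
    rw [← supDist]; linarith
  obtain ⟨z, hzlt⟩ := exists_lt_of_lt_ciSup hz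
  obtain ⟨u, v, huv⟩ := abs_le_form hf hg x hε8
  obtain ⟨w, s, hws⟩ := abs_le_form hh hk z hε8
  have hyp := hX u v w s
  have key : dist u v - f u - g v + (dist w s - h w - k s) ≤
      max (supDist f h + supDist g k) (supDist f k + supDist g h) + δ := by
    rcases le_total (dist u s + dist v w) (dist u w + dist v s) with hmax | hmax
    · rw [max_eq_left hmax] at hyp
      have h1 := form_le_supDist hf.1 hh.1 u w
      have h2 := form_le_supDist hg.1 hk.1 v s
      have := le_max_left (supDist f h + supDist g k) (supDist f k + supDist g h)
      linarith
    · rw [max_eq_right hmax] at hyp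
      have h1 := form_le_supDist hf.1 hk.1 u s
      have h2 := form_le_supDist hg.1 hh.1 v w
      have := le_max_right (supDist f h + supDist g k) (supDist f k + supDist g h)
      linarith
  linarith
end

section
/- If X is a geodesic δ-hyperbolic metric space, then every point of the injective hull E(X) is within distance δ of the image of the canonical embedding e : X → E(X); i.e., e(X) is δ-coarsely dense in E(X). -/
universe u

lemma delta_nonneg {X : Type u} [MetricSpace X] {f : X → ℝ} (hf : f ∈ Delta X) (x : X) :
    0 ≤ f x := by
  have := hf.2 x x
  simp at this
  linarith

/-- Minimal elements of `Delta X` are extremal. -/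
lemma injHull_extremal {X : Type u} [MetricSpace X] [Nonempty X] {f : X → ℝ}
    (hf : f ∈ InjHull X) (x : X) {ε : ℝ} (hε : 0 < ε) :
    ∃ y : X, f x + f y ≤ dist x y + ε := by
  set g : X → ℝ := fun u => ⨆ y : X, (dist u y - f y) with hg
  have hbdd : ∀ u : X, BddAbove (Set.range fun y => dist u y - f y) := by
    intro u
    refine ⟨f u, ?_⟩
    rintro _ ⟨y, rfl⟩
    have := hf.1.2 u y
    simp only
    linarith
  have hgle : ∀ u, g u ≤ f u := by
    intro u
    exact ciSup_le fun y => by have := hf.1.2 u y; linarith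
  have hgab : ∀ u v, g u ≤ g v + dist u v := by
    intro u v
    refine ciSup_le fun y => ?_
    have h1 : dist u y ≤ dist v y + dist u v := by
      have := dist_triangle u v y
      linarith [dist_comm u v ▸ this]
    have h2 : dist v y - f y ≤ g v := le_ciSup (hbdd v) y
    linarith
  have hglip : LipschitzWith 1 g := by
    apply LipschitzWith.of_dist_le_mul
    intro u v
    rw [Real.dist_eq, NNReal.coe_one, one_mul, abs_sub_le_iff]
    constructor
    · have := hgab u v; linarith
    · have := hgab v u; rw [dist_comm]; linarith
  have hflip : ∀ u v, |f u - f v| ≤ dist u v := by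
    intro u v
    have := hf.1.1.dist_le_mul u v
    rwa [Real.dist_eq, NNReal.coe_one, one_mul] at this
  set p : X → ℝ := fun u => (f u + g u) / 2 with hp
  have hpDelta : p ∈ Delta X := by
    constructor
    · apply LipschitzWith.of_dist_le_mul
      intro u v
      rw [Real.dist_eq, NNReal.coe_one, one_mul]
      have h1 : |f u - f v| ≤ dist u v := hflip u v
      have h2 : |g u - g v| ≤ dist u v := by
        rw [abs_sub_le_iff]
        constructor
        · have := hgab u v; linarith
        · have := hgab v u; rw [dist_comm]; linarith
      have : p u - p v = ((f u - f v) + (g u - g v)) / 2 := by simp [hp]; ring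
      rw [this]
      rw [abs_le] at h1 h2 ⊢
      constructor <;> [linarith [h1.1, h2.1]; linarith [h1.2, h2.2]]
    · intro u v
      have h1 : dist u v - f v ≤ g u := le_ciSup (hbdd u) v
      have h2 : dist v u - f u ≤ g v := le_ciSup (hbdd v) u
      rw [dist_comm v u] at h2
      simp only [hp]
      linarith
  have hple : ∀ u, p u ≤ f u := fun u => by
    simp only [hp]; linarith [hgle u]
  have hpeq : p = f := hf.2 p hpDelta hple
  have hgf : g x = f x := by
    have := congrFun hpeq x
    simp only [hp] at this
    linarith
  have hlt : f x - ε < ⨆ y : X, (dist x y - f y) := by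
    show f x - ε < g x
    rw [hgf]; linarith
  obtain ⟨y, hy⟩ := exists_lt_of_lt_ciSup hlt
  exact ⟨y, by linarith⟩

/-- If `X` is a geodesic δ-hyperbolic metric space, then every point of `E X` is
within distance δ of the image of the canonical embedding `e x = dist x ·`. -/
theorem injHull_coarsely_dense {X : Type u} [MetricSpace X] [Nonempty X]
    (δ : ℝ) (hδ : 0 ≤ δ)
    (hgeo : ∀ x y : X, ∃ f : ℝ → X, f 0 = x ∧ f (dist x y) = y ∧
      ∀ s ∈ Set.Icc (0 : ℝ) (dist x y), ∀ t ∈ Set.Icc (0 : ℝ) (dist x y),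
        dist (f s) (f t) = |s - t|)
    (hX : ∀ x y z t : X, dist x y + dist z t ≤
      max (dist x z + dist y t) (dist x t + dist y z) + δ) :
    ∀ f ∈ InjHull X, (⨅ x : X, supDist f (fun y => dist x y)) ≤ δ := by
  intro f hf
  have hnn : ∀ u, 0 ≤ f u := delta_nonneg hf.1
  have hdd : ∀ u v, dist u v ≤ f u + f v := hf.1.2
  apply le_of_forall_pos_le_add
  intro ε hε
  obtain ⟨x⟩ := ‹Nonempty X›
  obtain ⟨y, hy⟩ := injHull_extremal hf x hε
  obtain ⟨γ, hγ0, hγd, hγiso⟩ := hgeo x y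
  set t : ℝ := min (f x) (dist x y) with ht
  have ht0 : 0 ≤ t := le_min (hnn x) dist_nonneg
  have htd : t ≤ dist x y := min_le_right _ _
  have htf : t ≤ f x := min_le_left _ _
  set z : X := γ t with hz
  have hxz : dist x z = t := by
    have := hγiso 0 ⟨le_refl 0, dist_nonneg⟩ t ⟨ht0, htd⟩
    rw [hγ0] at this
    rw [hz, this, abs_sub_comm, sub_zero, abs_of_nonneg ht0]
  have hzy : dist z y = dist x y - t := by
    have := hγiso t ⟨ht0, htd⟩ (dist x y) ⟨dist_nonneg, le_refl _⟩
    rw [hγd] at this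
    rw [hz, this, abs_of_nonpos (by linarith), neg_sub]
  -- key pointwise estimate
  have key : ∀ w : X, |f w - dist z w| ≤ δ + ε := by
    intro w
    rw [abs_sub_le_iff]
    constructor
    · -- f w - dist z w ≤ δ + ε
      apply sub_le_iff_le_add.mpr
      apply le_of_forall_pos_le_add
      intro ε' hε'
      obtain ⟨v, hv⟩ := injHull_extremal hf w hε'
      have h4 := hX w v x y
      have hvy : dist v y ≤ f v + f y := hdd v y
      have hvx : dist v x ≤ f v + f x := hdd v x
      have htr1 : dist x w ≤ dist x z + dist z w := dist_triangle x z w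
      have htr2 : dist y w ≤ dist y z + dist z w := dist_triangle y z w
      rw [hxz] at htr1
      rw [dist_comm y z, hzy] at htr2
      have hwx : dist w x = dist x w := dist_comm w x
      have hwy : dist w y = dist y w := dist_comm w y
      -- f x ≤ t + ε  and  f y + t ≤ dist x y + ε
      have hfx : f x ≤ t + ε := by
        rcases min_cases (f x) (dist x y) with ⟨h1, _⟩ | ⟨h1, h2⟩
        · rw [ht, h1]; linarith
        · rw [ht, h1]; linarith [hnn y]
      have hfy : f y + t ≤ dist x y + ε := by linarith
      rcases le_total (dist w x + dist v y) (dist w y + dist v x) with hmax | hmax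
      · rw [max_eq_right hmax] at h4
        -- d w v + d x y ≤ d w y + d v x + δ ; d w v ≥ f w + f v - ε'
        -- f w ≤ d w y + f x - d x y + δ + ε' ≤ (d z w + ...) ...
        linarith
      · rw [max_eq_left hmax] at h4
        linarith
    · -- dist z w - f w ≤ δ + ε
      have h4 := hX w z x y
      have hwzx : dist z x = t := by rw [dist_comm]; exact hxz
      have hwx : dist w x ≤ f w + f x := hdd w x
      have hwy : dist w y ≤ f w + f y := hdd w y
      have harg1 : dist w x + dist z y ≤ f w + ε + dist x y := by
        rw [hzy]
        rcases min_cases (f x) (dist x y) with ⟨h1, _⟩ | ⟨h1, h2⟩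
        · rw [ht, h1]; linarith
        · rw [ht, h1]
          have : dist w x ≤ dist w y + dist y x := dist_triangle w y x
          rw [dist_comm y x] at this
          linarith
      have harg2 : dist w y + dist z x ≤ f w + ε + dist x y := by
        rw [hwzx]
        linarith
      have hmax : max (dist w x + dist z y) (dist w y + dist z x) ≤ f w + ε + dist x y :=
        max_le harg1 harg2
      have := h4.trans (by linarith : max (dist w x + dist z y) (dist w y + dist z x) + δ
        ≤ f w + ε + dist x y + δ)
      rw [dist_comm z w]
      linarith
  -- conclude
  have hb : BddBelow (Set.range fun x : X => supDist f (fun y => dist x y)) := by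
    refine ⟨0, ?_⟩
    rintro _ ⟨u, rfl⟩
    exact Real.iSup_nonneg fun w => abs_nonneg _
  calc (⨅ x : X, supDist f (fun y => dist x y)) ≤ supDist f (fun y => dist z y) :=
        ciInf_le hb z
    _ ≤ δ + ε := ciSup_le fun w => key w
end

section
/- A complete metric space which is ε-coarsely injective for every ε > 0 is hyperconvex (hence injective). -/
universe u

/-- A complete metric space which is ε-coarsely injective for every `ε > 0` is
hyperconvex. -/
theorem hyperconvex_of_coarsely_injective {X : Type u} [MetricSpace X]
    [CompleteSpace X]
    (h : ∀ ε : ℝ, 0 < ε → ∀ (ι : Type u) (x : ι → X) (r : ι → ℝ),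
      (∀ i, 0 ≤ r i) → (∀ i j, i ≠ j → dist (x i) (x j) ≤ r i + r j) →
      (⋂ i, Metric.closedBall (x i) (r i + ε)).Nonempty) :
    ∀ (ι : Type u) (x : ι → X) (r : ι → ℝ), (∀ i, 0 ≤ r i) →
      (∀ i j, i ≠ j → dist (x i) (x j) ≤ r i + r j) →
      (⋂ i, Metric.closedBall (x i) (r i)).Nonempty := by
  intro ι x r hr hd
  -- base point
  obtain ⟨p0, hp0⟩ := h 1 one_pos ι x r hr hd
  simp only [Set.mem_iInter, Metric.mem_closedBall] at hp0
  have hp0' : ∀ i, dist p0 (x i) ≤ r i + (1/2 : ℝ) ^ (0 : ℕ) := by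
    simpa using hp0
  -- step
  have key : ∀ (n : ℕ) (p : X), (∀ i, dist p (x i) ≤ r i + (1/2 : ℝ) ^ n) →
      ∃ q : X, (∀ i, dist q (x i) ≤ r i + (1/2 : ℝ) ^ (n + 1)) ∧
        dist p q ≤ (1/2 : ℝ) ^ n + (1/2 : ℝ) ^ (n + 1) := by
    intro n p hp
    obtain ⟨q, hq⟩ := h ((1/2 : ℝ) ^ (n + 1)) (by positivity) (Option ι)
      (fun o => o.elim p x) (fun o => o.elim ((1/2 : ℝ) ^ n) r)
      (by rintro (_ | i) <;> simp [hr])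
      (by
        rintro (_ | i) (_ | j) hne
        · exact absurd rfl hne
        · simpa [add_comm] using hp j
        · simpa [dist_comm, add_comm] using hp i
        · exact hd i j (fun hij => hne (by rw [hij])))
    simp only [Set.mem_iInter, Metric.mem_closedBall] at hq
    refine ⟨q, fun i => hq (some i), ?_⟩
    have := hq none
    simpa [dist_comm] using this
  choose f hf1 hf2 using key
  -- the sequence
  let u : ∀ n : ℕ, {p : X // ∀ i, dist p (x i) ≤ r i + (1/2 : ℝ) ^ n} :=
    fun n => Nat.rec ⟨p0, hp0'⟩ (fun n pn => ⟨f n pn.1 pn.2, hf1 n pn.1 pn.2⟩) n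
  have hustep : ∀ n, dist (u n).1 (u (n + 1)).1 ≤ (3/2 : ℝ) * (1/2 : ℝ) ^ n := by
    intro n
    have := hf2 n (u n).1 (u n).2
    calc dist (u n).1 (u (n + 1)).1 = dist (u n).1 (f n (u n).1 (u n).2) := rfl
      _ ≤ (1/2 : ℝ) ^ n + (1/2 : ℝ) ^ (n + 1) := this
      _ = (3/2 : ℝ) * (1/2 : ℝ) ^ n := by ring
  have hcauchy : CauchySeq (fun n => (u n).1) :=
    cauchySeq_of_le_geometric (1/2 : ℝ) (3/2 : ℝ) (by norm_num) hustep
  obtain ⟨p, hp⟩ := cauchySeq_tendsto_of_complete hcauchy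
  refine ⟨p, ?_⟩
  simp only [Set.mem_iInter, Metric.mem_closedBall]
  intro i
  have h1 : Filter.Tendsto (fun n => dist (u n).1 (x i)) Filter.atTop
      (nhds (dist p (x i))) := (Continuous.dist continuous_id continuous_const).continuousAt.tendsto.comp hp
  have h2 : Filter.Tendsto (fun n : ℕ => r i + (1/2 : ℝ) ^ n) Filter.atTop
      (nhds (r i)) := by
    have := tendsto_pow_atTop_nhds_zero_of_lt_one (by norm_num : (0:ℝ) ≤ 1/2)
      (by norm_num : (1/2 : ℝ) < 1)
    simpa using (tendsto_const_nhds.add this)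
  exact le_of_tendsto_of_tendsto' h1 h2 (fun n => (u n).2 i)
end

section
/- Let P be a homogeneous poset without bowties. Then adjoining a minimum 0 and a maximum 1 to P yields a lattice. Conversely, if P ∪ {0,1} is a lattice then P has no bowtie. -/
universe u

def HomogeneousPoset (P : Type u) [PartialOrder P] : Prop :=
  ∀ x y : P, x ≤ y → ∃ N : ℕ, ∀ (n : ℕ) (c : Fin (n + 1) → P),
    StrictMono c → c 0 = x → c (Fin.last n) = y → n ≤ N

def Bowtie {P : Type u} [PartialOrder P] (a b c d : P) : Prop :=
  a ≠ b ∧ a ≠ c ∧ a ≠ d ∧ b ≠ c ∧ b ≠ d ∧ c ≠ d ∧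
  a ≤ c ∧ a ≤ d ∧ b ≤ c ∧ b ≤ d ∧
  ¬ a ≤ b ∧ ¬ b ≤ a ∧ ¬ c ≤ d ∧ ¬ d ≤ c ∧
  ∀ x : P, a ≤ x → b ≤ x → x ≤ c → x ≤ d → (x = a ∨ x = b ∨ x = c ∨ x = d)

section Aux
variable {Q : Type u} [PartialOrder Q]

lemma my_strictMono_snoc {n : ℕ} (c : Fin (n+1) → Q) (z : Q) (hc : StrictMono c)
    (hz : ∀ i, c i < z) : StrictMono (Fin.snoc c z : Fin (n+2) → Q) := by
  intro i j hij
  rcases Fin.eq_castSucc_or_eq_last j with ⟨j', rfl⟩ | rfl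
  · rcases Fin.eq_castSucc_or_eq_last i with ⟨i', rfl⟩ | rfl
    · simpa [Fin.snoc_castSucc] using hc (by simpa [Fin.castSucc_lt_castSucc_iff] using hij)
    · exact absurd hij (by simp [Fin.lt_iff_val_lt_val])
  · rcases Fin.eq_castSucc_or_eq_last i with ⟨i', rfl⟩ | rfl
    · simpa [Fin.snoc_castSucc, Fin.snoc_last] using hz i'
    · exact absurd hij (lt_irrefl _)

/-- There is a minimal common upper bound of `p, q` below any common upper bound `z`,
provided `p` itself is not a common upper bound. -/
lemma exists_minimal_ub (p q : Q) (hqp : ¬ q ≤ p) :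
    ∀ N z, p ≤ z → q ≤ z →
    (∀ (n : ℕ) (c : Fin (n+1) → Q), StrictMono c → c 0 = p → c (Fin.last n) = z → n ≤ N) →
    ∃ m, p ≤ m ∧ q ≤ m ∧ m ≤ z ∧ ∀ u, p ≤ u → q ≤ u → u ≤ m → u = m := by
  intro N
  induction N with
  | zero =>
    intro z hpz hqz hb
    by_cases hmin : ∀ u, p ≤ u → q ≤ u → u ≤ z → u = z
    · exact ⟨z, hpz, hqz, le_refl z, hmin⟩
    · push_neg at hmin
      obtain ⟨u, hpu, hqu, huz, hne⟩ := hmin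
      have hpu' : p < u := lt_of_le_of_ne hpu (fun h => hqp (h ▸ hqu))
      have huz' : u < z := lt_of_le_of_ne huz hne
      have : (2:ℕ) ≤ 0 := by
        refine hb 2 ![p, u, z] ?_ rfl rfl
        intro i j hij
        fin_cases i <;> fin_cases j <;> simp_all <;> exact hpu'.trans huz'
      omega
  | succ N ih =>
    intro z hpz hqz hb
    by_cases hmin : ∀ u, p ≤ u → q ≤ u → u ≤ z → u = z
    · exact ⟨z, hpz, hqz, le_refl z, hmin⟩
    · push_neg at hmin
      obtain ⟨u, hpu, hqu, huz, hne⟩ := hmin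
      have huz' : u < z := lt_of_le_of_ne huz hne
      have hb' : ∀ (n : ℕ) (c : Fin (n+1) → Q), StrictMono c → c 0 = p →
          c (Fin.last n) = u → n ≤ N := by
        intro n c hc h0 hl
        have : n + 1 ≤ N + 1 := by
          refine hb (n+1) (Fin.snoc c z) ?_ ?_ ?_
          · exact my_strictMono_snoc c z hc (fun i => lt_of_le_of_lt (hc.monotone (Fin.le_last i)) (hl ▸ huz'))
          · show (Fin.snoc c z : Fin (n+2) → Q) (Fin.castSucc 0) = p
            rw [Fin.snoc_castSucc]; exact h0
          · simp [Fin.snoc_last]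
        omega
      obtain ⟨m, h1, h2, h3, h4⟩ := ih u hpu hqu hb'
      exact ⟨m, h1, h2, h3.trans huz, h4⟩

/-- In a homogeneous poset with no bowties, any two elements with a common upper
bound have a least upper bound. -/
lemma exists_least_ub (hhom : HomogeneousPoset Q)
    (hnb : ¬ ∃ a b c d : Q, Bowtie a b c d) (p q z : Q) (hpz : p ≤ z) (hqz : q ≤ z) :
    ∃ m, p ≤ m ∧ q ≤ m ∧ ∀ w, p ≤ w → q ≤ w → m ≤ w := by
  by_cases hpq : p ≤ q
  · exact ⟨q, hpq, le_refl q, fun w _ h => h⟩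
  by_cases hqp : q ≤ p
  · exact ⟨p, le_refl p, hqp, fun w h _ => h⟩
  obtain ⟨N, hN⟩ := hhom p z hpz
  obtain ⟨m, h1, h2, h3, h4⟩ := exists_minimal_ub p q hqp N z hpz hqz hN
  refine ⟨m, h1, h2, ?_⟩
  intro w hpw hqw
  obtain ⟨N', hN'⟩ := hhom p w hpw
  obtain ⟨m', g1, g2, g3, g4⟩ := exists_minimal_ub p q hqp N' w hpw hqw hN'
  by_cases hmm : m = m'
  · exact hmm ▸ g3
  exfalso
  refine hnb ⟨p, q, m, m', ?_, ?_, ?_, ?_, ?_, ?_, h1, g1, h2, g2, hpq, hqp, ?_, ?_, ?_⟩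
  · exact fun h => hpq (h ▸ le_refl p)
  · exact fun h => hqp (h ▸ h2)
  · exact fun h => hqp (h ▸ g2)
  · exact fun h => hpq (h ▸ h1)
  · exact fun h => hpq (h ▸ g1)
  · exact hmm
  · exact fun h => hmm (g4 m h1 h2 h)
  · exact fun h => (hmm (h4 m' g1 g2 h).symm)
  · intro x hpx hqx hxm hxm'
    exact Or.inr (Or.inr (Or.inl (h4 x hpx hqx hxm)))

lemma homogeneous_dual (hhom : HomogeneousPoset Q) : HomogeneousPoset Qᵒᵈ := by
  intro x y hxy
  obtain ⟨N, hN⟩ := hhom (OrderDual.ofDual y) (OrderDual.ofDual x) hxy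
  refine ⟨N, fun n c hc h0 hl => ?_⟩
  refine hN n (fun i => OrderDual.ofDual (c i.rev)) ?_ ?_ ?_
  · intro i j hij
    exact hc (Fin.rev_lt_rev.mpr hij)
  · show OrderDual.ofDual (c (Fin.rev 0)) = _
    rw [Fin.rev_zero, hl]
  · show OrderDual.ofDual (c (Fin.last n).rev) = _
    rw [Fin.rev_last, h0]

lemma no_bowtie_dual (hnb : ¬ ∃ a b c d : Q, Bowtie a b c d) :
    ¬ ∃ a b c d : Qᵒᵈ, Bowtie a b c d := by
  rintro ⟨a, b, c, d, h1, h2, h3, h4, h5, h6, h7, h8, h9, h10, h11, h12, h13, h14, h15⟩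
  refine hnb ⟨OrderDual.ofDual c, OrderDual.ofDual d, OrderDual.ofDual a, OrderDual.ofDual b,
    h6, fun h => h2 h.symm, fun h => h4 h.symm, fun h => h3 h.symm, fun h => h5 h.symm,
    h1, h7, h9, h8, h10, fun h => h14 h, fun h => h13 h, fun h => h12 h, fun h => h11 h, ?_⟩
  intro x hcx hdx hxa hxb
  rcases h15 (OrderDual.toDual x) hxa hxb hcx hdx with h | h | h | h
  · exact Or.inr (Or.inr (Or.inl h))
  · exact Or.inr (Or.inr (Or.inr h))
  · exact Or.inl h
  · exact Or.inr (Or.inl h)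

lemma exists_greatest_lb (hhom : HomogeneousPoset Q)
    (hnb : ¬ ∃ a b c d : Q, Bowtie a b c d) (p q z : Q) (hzp : z ≤ p) (hzq : z ≤ q) :
    ∃ m, m ≤ p ∧ m ≤ q ∧ ∀ w, w ≤ p → w ≤ q → w ≤ m := by
  obtain ⟨m, h1, h2, h3⟩ := exists_least_ub (Q := Qᵒᵈ) (homogeneous_dual hhom)
    (no_bowtie_dual hnb) (OrderDual.toDual p) (OrderDual.toDual q) (OrderDual.toDual z) hzp hzq
  exact ⟨OrderDual.ofDual m, h1, h2, fun w hw1 hw2 => h3 (OrderDual.toDual w) hw1 hw2⟩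

end Aux

section Pair
variable {A : Type*} [Preorder A]

lemma isLUB_pair_right {a b : A} (h : a ≤ b) : IsLUB {a, b} b :=
  ⟨by rintro x (rfl | rfl); exacts [h, le_rfl], fun w hw => hw (Set.mem_insert_of_mem _ rfl)⟩

lemma isLUB_pair_left {a b : A} (h : b ≤ a) : IsLUB {a, b} a :=
  ⟨by rintro x (rfl | rfl); exacts [le_rfl, h], fun w hw => hw (Set.mem_insert _ _)⟩

lemma isGLB_pair_right {a b : A} (h : b ≤ a) : IsGLB {a, b} b :=
  ⟨by rintro x (rfl | rfl); exacts [h, le_rfl], fun w hw => hw (Set.mem_insert_of_mem _ rfl)⟩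

lemma isGLB_pair_left {a b : A} (h : a ≤ b) : IsGLB {a, b} a :=
  ⟨by rintro x (rfl | rfl); exacts [le_rfl, h], fun w hw => hw (Set.mem_insert _ _)⟩

end Pair

/-- For a homogeneous poset `P`, adjoining a bottom and a top yields a lattice if
and only if `P` has no bowtie. -/
theorem homogeneous_no_bowtie_iff_lattice {P : Type u} [PartialOrder P]
    (hhom : HomogeneousPoset P) :
    (¬ ∃ a b c d : P, Bowtie a b c d) ↔
    (∀ x y : WithBot (WithTop P),
      (∃ m, IsGLB {x, y} m) ∧ (∃ m, IsLUB {x, y} m)) := by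
  constructor
  · intro hnb x y
    have le_T : ∀ w : WithBot (WithTop P), w ≤ (((⊤ : WithTop P) : WithBot (WithTop P))) := by
      intro w
      induction w using WithBot.recBotCoe with
      | bot => exact bot_le
      | coe a => exact WithBot.coe_le_coe.mpr le_top
    induction x using WithBot.recBotCoe with
    | bot => exact ⟨⟨⊥, isGLB_pair_left bot_le⟩, ⟨y, isLUB_pair_right bot_le⟩⟩
    | coe a =>
      induction y using WithBot.recBotCoe with
      | bot => exact ⟨⟨⊥, isGLB_pair_right bot_le⟩, ⟨(a : WithBot (WithTop P)), isLUB_pair_left bot_le⟩⟩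
      | coe b =>
        induction a using WithTop.recTopCoe with
        | top =>
          exact ⟨⟨(b : WithBot (WithTop P)), isGLB_pair_right (le_T _)⟩,
                 ⟨((⊤ : WithTop P) : WithBot (WithTop P)), isLUB_pair_left (le_T _)⟩⟩
        | coe p =>
          induction b using WithTop.recTopCoe with
          | top =>
            exact ⟨⟨((p : WithTop P) : WithBot (WithTop P)), isGLB_pair_left (le_T _)⟩,
                   ⟨((⊤ : WithTop P) : WithBot (WithTop P)), isLUB_pair_right (le_T _)⟩⟩
          | coe q =>
            constructor
            · -- GLB
              by_cases h : ∃ z : P, z ≤ p ∧ z ≤ q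
              · obtain ⟨z, hzp, hzq⟩ := h
                obtain ⟨m, h1, h2, h3⟩ := exists_greatest_lb hhom hnb p q z hzp hzq
                refine ⟨((m : WithTop P) : WithBot (WithTop P)), ?_, ?_⟩
                · rintro w (rfl | rfl)
                  · exact_mod_cast h1
                  · exact_mod_cast h2
                · intro w hw
                  have hwp : w ≤ ((p : WithTop P) : WithBot (WithTop P)) := hw (Set.mem_insert _ _)
                  have hwq : w ≤ ((q : WithTop P) : WithBot (WithTop P)) := hw (Set.mem_insert_of_mem _ rfl)
                  induction w using WithBot.recBotCoe with
                  | bot => exact bot_le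
                  | coe a =>
                    obtain ⟨w', rfl, hw'p⟩ := WithTop.le_coe_iff.mp (WithBot.coe_le_coe.mp hwp)
                    have hw'q : w' ≤ q := by exact_mod_cast hwq
                    exact_mod_cast h3 w' hw'p hw'q
              · refine ⟨⊥, fun w hw => bot_le, ?_⟩
                intro w hw
                have hwp : w ≤ ((p : WithTop P) : WithBot (WithTop P)) := hw (Set.mem_insert _ _)
                have hwq : w ≤ ((q : WithTop P) : WithBot (WithTop P)) := hw (Set.mem_insert_of_mem _ rfl)
                induction w using WithBot.recBotCoe with
                | bot => exact le_refl _
                | coe a =>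
                  obtain ⟨w', rfl, hw'p⟩ := WithTop.le_coe_iff.mp (WithBot.coe_le_coe.mp hwp)
                  have hw'q : w' ≤ q := by exact_mod_cast hwq
                  exact absurd ⟨w', hw'p, hw'q⟩ h
            · -- LUB
              by_cases h : ∃ z : P, p ≤ z ∧ q ≤ z
              · obtain ⟨z, hpz, hqz⟩ := h
                obtain ⟨m, h1, h2, h3⟩ := exists_least_ub hhom hnb p q z hpz hqz
                refine ⟨((m : WithTop P) : WithBot (WithTop P)), ?_, ?_⟩
                · rintro w (rfl | rfl)
                  · exact_mod_cast h1
                  · exact_mod_cast h2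
                · intro w hw
                  have hwp : ((p : WithTop P) : WithBot (WithTop P)) ≤ w := hw (Set.mem_insert _ _)
                  have hwq : ((q : WithTop P) : WithBot (WithTop P)) ≤ w := hw (Set.mem_insert_of_mem _ rfl)
                  obtain ⟨a, rfl, hpa⟩ := WithBot.coe_le_iff.mp hwp
                  induction a using WithTop.recTopCoe with
                  | top => exact le_T _
                  | coe w' =>
                    have hp : p ≤ w' := by exact_mod_cast hpa
                    have hq : q ≤ w' := by exact_mod_cast hwq
                    exact_mod_cast h3 w' hp hq
              · refine ⟨((⊤ : WithTop P) : WithBot (WithTop P)), fun w hw => le_T _, ?_⟩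
                intro w hw
                have hwp : ((p : WithTop P) : WithBot (WithTop P)) ≤ w := hw (Set.mem_insert _ _)
                have hwq : ((q : WithTop P) : WithBot (WithTop P)) ≤ w := hw (Set.mem_insert_of_mem _ rfl)
                obtain ⟨a, rfl, hpa⟩ := WithBot.coe_le_iff.mp hwp
                induction a using WithTop.recTopCoe with
                | top => exact le_refl _
                | coe w' =>
                  have hp : p ≤ w' := by exact_mod_cast hpa
                  have hq : q ≤ w' := by exact_mod_cast hwq
                  exact absurd ⟨w', hp, hq⟩ h
  · intro hlat
    rintro ⟨a, b, c, d, h1, h2, h3, h4, h5, h6, hac, had, hbc, hbd, h11, h12, h13, h14, h15⟩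
    obtain ⟨-, m, hm⟩ := hlat ((a : WithTop P) : WithBot (WithTop P)) ((b : WithTop P) : WithBot (WithTop P))
    have ham : ((a : WithTop P) : WithBot (WithTop P)) ≤ m := hm.1 (Set.mem_insert _ _)
    have hbm : ((b : WithTop P) : WithBot (WithTop P)) ≤ m := hm.1 (Set.mem_insert_of_mem _ rfl)
    have hmc : m ≤ ((c : WithTop P) : WithBot (WithTop P)) := by
      apply hm.2
      rintro w (rfl | rfl)
      · exact_mod_cast hac
      · exact_mod_cast hbc
    have hmd : m ≤ ((d : WithTop P) : WithBot (WithTop P)) := by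
      apply hm.2
      rintro w (rfl | rfl)
      · exact_mod_cast had
      · exact_mod_cast hbd
    obtain ⟨m', rfl, ham'⟩ := WithBot.coe_le_iff.mp ham
    obtain ⟨s, rfl, hsc⟩ := WithTop.le_coe_iff.mp (WithBot.coe_le_coe.mp hmc)
    have has : a ≤ s := WithTop.coe_le_coe.mp ham'
    have hbs : b ≤ s := by exact_mod_cast hbm
    have hsd : s ≤ d := by exact_mod_cast hmd
    rcases h15 s has hbs hsc hsd with rfl | rfl | rfl | rfl
    · exact h12 hbs
    · exact h11 has
    · exact h13 hsd
    · exact h14 hsc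
end
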